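/- arXiv:1112.2068 — 2 statements merged into one kernel-verified Lean document; each statement's English description precedes it below -/
import Mathlib

section
/- Let G₁, G₂ be graphs, S₁ ⊆ V₁, S₂ ⊆ V₂. If S₁ × S₂ is a defensive k-alliance free set in G₁ □ G₂ and S₂ is a defensive k'-alliance in G₂, then S₁ is a defensive (k − k')-alliance free set in G₁. -/
open Classical

/-- Number of neighbors of `v` inside `S`. -/
noncomputable def dS {V : Type*} (G : SimpleGraph V) (S : Set V) (v : V) : ℕ :=
  {u ∈ S | G.Adj v u}.ncard

/-- `S` is a defensive `k`-alliance. -/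
def IsDefAlliance {V : Type*} (G : SimpleGraph V) (k : ℤ) (S : Set V) : Prop :=
  S.Nonempty ∧ ∀ v ∈ S, (dS G S v : ℤ) ≥ (dS G Sᶜ v : ℤ) + k

/-- `X` is a defensive `k`-alliance free set. -/
def IsDafFree {V : Type*} (G : SimpleGraph V) (k : ℤ) (X : Set V) : Prop :=
  ∀ S : Set V, S ⊆ X → ¬ IsDefAlliance G k S

/-- Boundary: vertices outside `S` with a neighbor in `S`. -/
def obdry {V : Type*} (G : SimpleGraph V) (S : Set V) : Set V :=
  {v | v ∉ S ∧ ∃ u ∈ S, G.Adj v u}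

/-- `S` is an offensive `k`-alliance. -/
def IsOffAlliance {V : Type*} (G : SimpleGraph V) (k : ℤ) (S : Set V) : Prop :=
  S.Nonempty ∧ ∀ v ∈ obdry G S, (dS G S v : ℤ) ≥ (dS G Sᶜ v : ℤ) + k

/-- `X` is an offensive `k`-alliance free set. -/
def IsOafFree {V : Type*} (G : SimpleGraph V) (k : ℤ) (X : Set V) : Prop :=
  ∀ S : Set V, S ⊆ X → ¬ IsOffAlliance G k S

/-- `S` is a powerful `k`-alliance. -/
def IsPowAlliance {V : Type*} (G : SimpleGraph V) (k : ℤ) (S : Set V) : Prop :=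
  IsDefAlliance G k S ∧ IsOffAlliance G (k + 2) S

/-- `X` is a powerful `k`-alliance free set. -/
def IsPafFree {V : Type*} (G : SimpleGraph V) (k : ℤ) (X : Set V) : Prop :=
  ∀ S : Set V, S ⊆ X → ¬ IsPowAlliance G k S

/-- Maximum cardinality of a defensive `k`-alliance free set. -/
noncomputable def phiD {V : Type*} (G : SimpleGraph V) (k : ℤ) : ℕ :=
  sSup {n : ℕ | ∃ X : Set V, IsDafFree G k X ∧ X.ncard = n}

/-- Maximum cardinality of an offensive `k`-alliance free set. -/
noncomputable def phiO {V : Type*} (G : SimpleGraph V) (k : ℤ) : ℕ :=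
  sSup {n : ℕ | ∃ X : Set V, IsOafFree G k X ∧ X.ncard = n}

/-- Maximum cardinality of a powerful `k`-alliance free set. -/
noncomputable def phiP {V : Type*} (G : SimpleGraph V) (k : ℤ) : ℕ :=
  sSup {n : ℕ | ∃ X : Set V, IsPafFree G k X ∧ X.ncard = n}

/-! In `G₁ □ G₂` a vertex `(a, b)` has its neighbours in row `b` and in column `a`, so for
`(a, b) ∈ S ×ˢ S₂` its degrees into `S ×ˢ S₂` and into the complement split as sums of the
corresponding degrees of `a` in `G₁` and of `b` in `G₂`. Hence a defensive `(k - k')`-alliance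
`S ⊆ S₁` would give the defensive `k`-alliance `S ×ˢ S₂ ⊆ S₁ ×ˢ S₂`. -/

open SimpleGraph

lemma dS_boxProd {V₁ V₂ : Type*} [Finite V₁] [Finite V₂]
    (G₁ : SimpleGraph V₁) (G₂ : SimpleGraph V₂) (T : Set (V₁ × V₂)) (a : V₁) (b : V₂) :
    dS (G₁ □ G₂) T (a, b) = dS G₁ {c | (c, b) ∈ T} a + dS G₂ {d | (a, d) ∈ T} b := by
  have hsplit : {u ∈ T | (G₁ □ G₂).Adj (a, b) u} =
      (·, b) '' {c | (c, b) ∈ T ∧ G₁.Adj a c} ∪ (a, ·) '' {d | (a, d) ∈ T ∧ G₂.Adj b d} := by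
    ext ⟨c, d⟩
    simp only [boxProd_adj, Set.mem_union, Set.mem_image, Set.mem_ofPred_eq, Prod.mk.injEq]
    constructor
    · rintro ⟨hT, ⟨hadj, rfl⟩ | ⟨hadj, rfl⟩⟩
      exacts [Or.inl ⟨c, ⟨hT, hadj⟩, rfl, rfl⟩, Or.inr ⟨d, ⟨hT, hadj⟩, rfl, rfl⟩]
    · rintro (⟨c, ⟨hT, hadj⟩, rfl, rfl⟩ | ⟨d, ⟨hT, hadj⟩, rfl, rfl⟩)
      exacts [⟨hT, Or.inl ⟨hadj, rfl⟩⟩, ⟨hT, Or.inr ⟨hadj, rfl⟩⟩]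
  have hdisj : Disjoint ((·, b) '' {c | (c, b) ∈ T ∧ G₁.Adj a c})
      ((a, ·) '' {d | (a, d) ∈ T ∧ G₂.Adj b d}) := by
    rw [Set.disjoint_left]
    rintro _ ⟨c, ⟨-, hadj⟩, rfl⟩ ⟨d, -, hcd⟩
    exact G₁.irrefl ((Prod.mk.inj hcd).1 ▸ hadj)
  rw [dS, hsplit, Set.ncard_union_eq hdisj (Set.toFinite _) (Set.toFinite _),
    Set.ncard_image_of_injective _ (Prod.mk_left_injective b),
    Set.ncard_image_of_injective _ (Prod.mk_right_injective a)]
  rfl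

lemma IsDefAlliance.boxProd {V₁ V₂ : Type*} [Finite V₁] [Finite V₂]
    {G₁ : SimpleGraph V₁} {G₂ : SimpleGraph V₂} {k₁ k₂ : ℤ} {S₁ : Set V₁} {S₂ : Set V₂}
    (h₁ : IsDefAlliance G₁ k₁ S₁) (h₂ : IsDefAlliance G₂ k₂ S₂) :
    IsDefAlliance (G₁ □ G₂) (k₁ + k₂) (S₁ ×ˢ S₂) := by
  refine ⟨h₁.1.prod h₂.1, ?_⟩
  rintro ⟨a, b⟩ ⟨ha, hb⟩
  have hin : dS (G₁ □ G₂) (S₁ ×ˢ S₂) (a, b) = dS G₁ S₁ a + dS G₂ S₂ b := by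
    rw [dS_boxProd]
    simp [ha, hb]
  have hout : dS (G₁ □ G₂) (S₁ ×ˢ S₂)ᶜ (a, b) = dS G₁ S₁ᶜ a + dS G₂ S₂ᶜ b := by
    rw [dS_boxProd]
    simp only [Set.mem_compl_iff, Set.mem_prod, ha, hb, true_and, and_true]
    rfl
  have hA := h₁.2 a ha
  have hB := h₂.2 b hb
  push_cast [hin, hout]
  linarith

theorem stmt10 {V₁ V₂ : Type*} [Fintype V₁] [Fintype V₂]
    (G₁ : SimpleGraph V₁) (G₂ : SimpleGraph V₂)
    (k k' : ℤ) (S₁ : Set V₁) (S₂ : Set V₂)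
    (h : IsDafFree (G₁.boxProd G₂) k (S₁ ×ˢ S₂))
    (hS₂ : IsDefAlliance G₂ k' S₂) :
    IsDafFree G₁ (k - k') S₁ := by
  intro S hS hS_alliance
  have hprod := hS_alliance.boxProd hS₂
  rw [sub_add_cancel] at hprod
  exact h _ (Set.prod_mono hS subset_rfl) hprod
end

section
/- Let G₁, G₂ be graphs and S ⊆ V₁ × V₂. If the projection of S onto V₁ is an offensive k-alliance free set in G₁, then S is an offensive (k − δ₂)-alliance free set in G₁ □ G₂, where δ₂ is the minimum degree of G₂. -/
open Classical

/-!
Project an offensive alliance `T` of `G₁ □ G₂` to `P = Prod.fst '' T`. A vertex `v` on the boundary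
of `P` has a neighbour `u` with `(u, b) ∈ T`; then `(v, b)` is on the boundary of `T`, and all its
`T`-neighbours lie in the layer `V₁ × {b}`, so it has at most as many as `v` has in `P`. The degree of
`(v, b)` exceeds that of `v` by `deg b ≥ δ₂`, and these extra neighbours count only against the
alliance, so the condition at `(v, b)` with `k - δ₂` yields the condition at `v` with `k`.
-/

open SimpleGraph

lemma dS_add_dS_compl {V : Type*} [Fintype V] (G : SimpleGraph V) (S : Set V) (v : V) :
    dS G S v + dS G Sᶜ v = (G.neighborSet v).ncard := by
  rw [dS, dS, ← Set.ncard_union_eq ?_ (Set.toFinite _) (Set.toFinite _)]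
  · congr 1
    ext u
    by_cases hu : u ∈ S <;> simp [mem_neighborSet, hu]
  · rw [Set.disjoint_left]
    rintro u ⟨hu, _⟩ ⟨hu', _⟩
    exact hu' hu

lemma SimpleGraph.ncard_neighborSet_boxProd {V₁ V₂ : Type*} [Fintype V₁] [Fintype V₂]
    (G₁ : SimpleGraph V₁) (G₂ : SimpleGraph V₂) (a : V₁) (b : V₂) :
    ((G₁ □ G₂).neighborSet (a, b)).ncard
      = (G₁.neighborSet a).ncard + (G₂.neighborSet b).ncard := by
  rw [neighborSet_boxProd, Set.ncard_union_eq, Set.prod_singleton, Set.singleton_prod,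
    Set.ncard_image_of_injective _ (Prod.mk_left_injective _),
    Set.ncard_image_of_injective _ (Prod.mk_right_injective _)]
  rw [Set.disjoint_left]
  rintro ⟨a, c⟩ ⟨ha, -⟩ ⟨ha', -⟩
  rw [Set.mem_singleton_iff] at ha'
  exact G₁.irrefl (ha' ▸ ha)

lemma SimpleGraph.minDegree_le_ncard_neighborSet {V : Type*} [Fintype V] (G : SimpleGraph V)
    [DecidableRel G.Adj] (v : V) : G.minDegree ≤ (G.neighborSet v).ncard := by
  rw [Set.ncard_eq_toFinset_card', Set.toFinset_card, card_neighborSet_eq_degree]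
  exact G.minDegree_le_degree v

lemma dS_boxProd_le_dS_image_fst {V₁ V₂ : Type*} [Fintype V₁]
    (G₁ : SimpleGraph V₁) (G₂ : SimpleGraph V₂) {T : Set (V₁ × V₂)} {v : V₁}
    (hv : v ∉ Prod.fst '' T) (b : V₂) :
    dS (G₁ □ G₂) T (v, b) ≤ dS G₁ (Prod.fst '' T) v := by
  have hsub : {p ∈ T | (G₁ □ G₂).Adj (v, b) p}
      ⊆ (·, b) '' {u ∈ Prod.fst '' T | G₁.Adj v u} := by
    rintro ⟨p₁, p₂⟩ ⟨hpT, hpadj⟩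
    rcases boxProd_adj.1 hpadj with ⟨hadj, rfl⟩ | ⟨-, rfl⟩
    · exact ⟨p₁, ⟨⟨_, hpT, rfl⟩, hadj⟩, rfl⟩
    · exact absurd ⟨_, hpT, rfl⟩ hv
  calc dS (G₁ □ G₂) T (v, b)
      ≤ ((·, b) '' {u ∈ Prod.fst '' T | G₁.Adj v u}).ncard :=
        Set.ncard_le_ncard hsub ((Set.toFinite _).image _)
    _ = dS G₁ (Prod.fst '' T) v :=
        Set.ncard_image_of_injective _ (Prod.mk_left_injective b)

lemma mk_mem_obdry_boxProd {V₁ V₂ : Type*} (G₁ : SimpleGraph V₁) (G₂ : SimpleGraph V₂)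
    {T : Set (V₁ × V₂)} {v : V₁} {w : V₁ × V₂} (hv : v ∉ Prod.fst '' T) (hw : w ∈ T)
    (hadj : G₁.Adj v w.1) : (v, w.2) ∈ obdry (G₁ □ G₂) T :=
  ⟨fun hT => hv ⟨_, hT, rfl⟩, w, hw, boxProd_adj.2 (Or.inl ⟨hadj, rfl⟩)⟩

lemma IsOffAlliance.image_fst {V₁ V₂ : Type*} [Fintype V₁] [Fintype V₂]
    {G₁ : SimpleGraph V₁} {G₂ : SimpleGraph V₂} [DecidableRel G₂.Adj] {k : ℤ}
    {T : Set (V₁ × V₂)} (hT : IsOffAlliance (G₁ □ G₂) (k - G₂.minDegree) T) :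
    IsOffAlliance G₁ k (Prod.fst '' T) := by
  refine ⟨hT.1.image _, ?_⟩
  rintro v ⟨hv, _, ⟨w, hw, rfl⟩, hadj⟩
  have hlift := hT.2 _ (mk_mem_obdry_boxProd G₁ G₂ hv hw hadj)
  have hle := dS_boxProd_le_dS_image_fst G₁ G₂ hv w.2
  have hprod := dS_add_dS_compl (G₁ □ G₂) T (v, w.2)
  rw [ncard_neighborSet_boxProd] at hprod
  have hbase := dS_add_dS_compl G₁ (Prod.fst '' T) v
  have hmin := minDegree_le_ncard_neighborSet G₂ w.2
  omega

theorem stmt13_general {V₁ V₂ : Type*} [Fintype V₁] [Fintype V₂]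
    (G₁ : SimpleGraph V₁) (G₂ : SimpleGraph V₂) [DecidableRel G₂.Adj]
    (k : ℤ) (S : Set (V₁ × V₂))
    (h : IsOafFree G₁ k (Prod.fst '' S)) :
    IsOafFree (G₁.boxProd G₂) (k - (G₂.minDegree : ℤ)) S :=
  fun _ hTS hT => h _ (Set.image_mono hTS) hT.image_fst

theorem stmt13 {V₁ V₂ : Type*} [Fintype V₁] [Fintype V₂] [Nonempty V₂]
    (G₁ : SimpleGraph V₁) (G₂ : SimpleGraph V₂) [DecidableRel G₂.Adj]
    (k : ℤ) (S : Set (V₁ × V₂))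
    (h : IsOafFree G₁ k (Prod.fst '' S)) :
    IsOafFree (G₁.boxProd G₂) (k - (G₂.minDegree : ℤ)) S :=
  stmt13_general G₁ G₂ k S h
end
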